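/- arXiv:2101.03862 — 4 statements merged into one kernel-verified Lean document; each statement's English description precedes it below -/
import Mathlib

section
/- For any commutative ring R and vectors v, w in R^n, the Suslin matrix satisfies S(v,w) · conj(S(v,w)) = conj(S(v,w)) · S(v,w) = (v·wᵀ) · I, where conj denotes the Suslin conjugate defined recursively. -/
open Matrix

variable {R : Type*} [CommRing R]

/-- Equivalence identifying `Fin (2^n) ⊕ Fin (2^n)` with `Fin (2^(n+1))`. -/
def blockEquiv (n : ℕ) : Fin (2^n) ⊕ Fin (2^n) ≃ Fin (2^(n+1)) :=
  finSumFinEquiv.trans (finCongr (by rw [pow_succ, mul_two]))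

/-- Build a `2^(n+1) × 2^(n+1)` matrix from four `2^n × 2^n` blocks. -/
def blocks {n : ℕ} (A B C D : Matrix (Fin (2^n)) (Fin (2^n)) R) :
    Matrix (Fin (2^(n+1))) (Fin (2^(n+1))) R :=
  Matrix.reindex (blockEquiv n) (blockEquiv n) (Matrix.fromBlocks A B C D)

/-- The pair (Suslin matrix, Suslin conjugate) of vectors `v, w : Fin (n+1) → R`,
defined recursively: `S(v,w) = [[a₁, S(v',w')],[-conj S(v',w'), b₁]]`,
`conj S(v,w) = [[b₁, -S(v',w')],[conj S(v',w'), a₁]]`. -/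
def suslinPair : (n : ℕ) → (Fin (n+1) → R) → (Fin (n+1) → R) →
    (Matrix (Fin (2^n)) (Fin (2^n)) R) × (Matrix (Fin (2^n)) (Fin (2^n)) R)
  | 0, v, w => (Matrix.of fun _ _ => v 0, Matrix.of fun _ _ => w 0)
  | n+1, v, w =>
      let P := suslinPair n (Fin.tail v) (Fin.tail w)
      (blocks (v 0 • (1 : Matrix (Fin (2^n)) (Fin (2^n)) R)) P.1 (-P.2) (w 0 • 1),
       blocks (w 0 • (1 : Matrix (Fin (2^n)) (Fin (2^n)) R)) (-P.1) P.2 (v 0 • 1))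

/-- The Suslin matrix `S_{n}(v,w)` of `v, w : Fin (n+1) → R`. -/
def suslinS {n : ℕ} (v w : Fin (n+1) → R) : Matrix (Fin (2^n)) (Fin (2^n)) R :=
  (suslinPair n v w).1

/-- The Suslin conjugate `conj (S_{n}(v,w))`. -/
def suslinConj {n : ℕ} (v w : Fin (n+1) → R) : Matrix (Fin (2^n)) (Fin (2^n)) R :=
  (suslinPair n v w).2

lemma blocks_mul {n : ℕ} (A B C D E F G H : Matrix (Fin (2^n)) (Fin (2^n)) R) :
    blocks A B C D * blocks E F G H =
      blocks (A*E + B*G) (A*F + B*H) (C*E + D*G) (C*F + D*H) := by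
  simp only [blocks, Matrix.reindex_apply, Matrix.submatrix_mul_equiv,
    Matrix.fromBlocks_multiply]

lemma blocks_smul_one {n : ℕ} (r : R) :
    blocks (r • 1) 0 0 (r • 1) = r • (1 : Matrix (Fin (2^(n+1))) (Fin (2^(n+1))) R) := by
  have h : Matrix.fromBlocks (r • (1 : Matrix (Fin (2^n)) (Fin (2^n)) R)) (r • 0) (r • 0) (r • 1)
      = r • Matrix.fromBlocks (1 : Matrix (Fin (2^n)) (Fin (2^n)) R) (0 : Matrix (Fin (2^n)) (Fin (2^n)) R)
        (0 : Matrix (Fin (2^n)) (Fin (2^n)) R) (1 : Matrix (Fin (2^n)) (Fin (2^n)) R) :=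
    (Matrix.fromBlocks_smul r _ _ _ _).symm
  simp only [smul_zero] at h
  simp [blocks, h, Matrix.fromBlocks_one, Matrix.reindex_apply, Matrix.submatrix_smul,
    Matrix.submatrix_one_equiv]

/-- S(v,w) * conj(S(v,w)) = conj(S(v,w)) * S(v,w) = (v·wᵀ) • I. -/
theorem suslin_mul_conj {n : ℕ} (v w : Fin (n+1) → R) :
    suslinS v w * suslinConj v w = (v ⬝ᵥ w) • (1 : Matrix (Fin (2^n)) (Fin (2^n)) R) ∧
    suslinConj v w * suslinS v w = (v ⬝ᵥ w) • (1 : Matrix (Fin (2^n)) (Fin (2^n)) R) := by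
  induction n with
  | zero =>
      constructor <;>
      · ext i j
        fin_cases i; fin_cases j
        simp [suslinS, suslinConj, suslinPair, Matrix.mul_apply, dotProduct, mul_comm]
  | succ n ih =>
      obtain ⟨h1, h2⟩ := ih (Fin.tail v) (Fin.tail w)
      have hS : suslinS v w = blocks (v 0 • 1) (suslinS (Fin.tail v) (Fin.tail w))
          (-(suslinConj (Fin.tail v) (Fin.tail w))) (w 0 • 1) := rfl
      have hC : suslinConj v w = blocks (w 0 • 1) (-(suslinS (Fin.tail v) (Fin.tail w)))
          (suslinConj (Fin.tail v) (Fin.tail w)) (v 0 • 1) := rfl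
      have hdot : v ⬝ᵥ w = v 0 * w 0 + (Fin.tail v ⬝ᵥ Fin.tail w) := by
        simp [dotProduct, Fin.sum_univ_succ, Fin.tail]
      set P := suslinS (Fin.tail v) (Fin.tail w)
      set Q := suslinConj (Fin.tail v) (Fin.tail w)
      constructor <;> rw [hS, hC, blocks_mul, ← blocks_smul_one (v ⬝ᵥ w)] <;> congr 1 <;>
        simp [h1, h2, hdot, Matrix.smul_mul, Matrix.mul_smul, smul_smul, add_smul,
          mul_comm (w 0) (v 0), add_comm]
end

section
/- For any commutative ring R and vectors v, w in R^n, the Suslin conjugate satisfies conj(S(v,w)) = S(w,v)ᵀ. -/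
open Matrix

variable {R : Type*} [CommRing R]

set_option linter.unusedSectionVars false in
lemma blocks_transpose {n : ℕ} (A B C D : Matrix (Fin (2^n)) (Fin (2^n)) R) :
    (blocks A B C D)ᵀ = blocks Aᵀ Cᵀ Bᵀ Dᵀ := by
  simp [blocks, transpose_reindex, fromBlocks_transpose]

/-- conj(S(v,w)) = S(w,v)ᵀ. -/
theorem suslin_conj_eq_transpose {n : ℕ} (v w : Fin (n+1) → R) :
    suslinConj v w = (suslinS w v)ᵀ := by
  induction n with
  | zero =>
    ext i j
    simp [suslinConj, suslinS, suslinPair]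
  | succ n ih =>
    simp only [suslinConj, suslinS, suslinPair] at *
    rw [blocks_transpose, transpose_neg, ih (Fin.tail v) (Fin.tail w),
      ih (Fin.tail w) (Fin.tail v)]
    simp
end

section
/- For 1 < i, j ≤ n with appropriate choices Xₖ ∈ {Eₖ, Fₖ}, and any λ ∈ R, the commutator identity [1 + λ Xᵢ X₁, 1 + X₁ Xⱼ] = 1 + λ Xᵢ Xⱼ holds, provided Xᵢ² = Xⱼ² = 0, Xᵢ Xⱼ + Xⱼ Xᵢ = 0, Xᵢ X₁ = conj(X₁) Xᵢ, X₁² = X₁, and X₁ + conj(X₁) = 1. -/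
open Matrix

/-- commutator identity [1 + λXᵢX₁, 1 + X₁Xⱼ] = 1 + λXᵢXⱼ, where
[a,b] = a b a⁻¹ b⁻¹ with (1 + λXᵢX₁)⁻¹ = 1 - λXᵢX₁ and (1 + X₁Xⱼ)⁻¹ = 1 - X₁Xⱼ. -/
theorem commutator_identity {R : Type*} [CommRing R] {m : ℕ}
    (X₁ Xi Xj : Matrix (Fin m) (Fin m) R) (lam : R)
    (h1 : X₁ * X₁ = X₁)
    (hi2 : Xi * Xi = 0) (hj2 : Xj * Xj = 0)
    (hanti : Xi * Xj + Xj * Xi = 0)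
    (hcomm_i : Xi * X₁ = (1 - X₁) * Xi)
    (hcomm_j : Xj * X₁ = (1 - X₁) * Xj) :
    (1 + lam • (Xi * X₁)) * (1 + X₁ * Xj) * (1 - lam • (Xi * X₁)) * (1 - X₁ * Xj)
      = 1 + lam • (Xi * Xj) := by

  have hji : Xj * Xi = -(Xi * Xj) := eq_neg_of_add_eq_zero_right hanti
  have hX1i : X₁ * Xi = Xi - Xi * X₁ := by
    rw [hcomm_i]; noncomm_ring
  have hX1j : X₁ * Xj = Xj - Xj * X₁ := by
    rw [hcomm_j]; noncomm_ring
  have hjXiXjX1 : Xi * Xj * X₁ = X₁ * (Xi * Xj) := by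
    calc Xi * Xj * X₁ = Xi * (Xj * X₁) := by noncomm_ring
    _ = Xi * ((1 - X₁) * Xj) := by rw [hcomm_j]
    _ = (Xi - Xi * X₁) * Xj := by noncomm_ring
    _ = (Xi - (1 - X₁) * Xi) * Xj := by rw [hcomm_i]
    _ = X₁ * (Xi * Xj) := by noncomm_ring
  have hP2 : (Xi * X₁) * (Xi * X₁) = 0 := by
    calc (Xi * X₁) * (Xi * X₁) = Xi * (X₁ * Xi) * X₁ := by noncomm_ring
    _ = Xi * (Xi - Xi * X₁) * X₁ := by rw [hX1i]
    _ = (Xi * Xi) * X₁ - (Xi * Xi) * (X₁ * X₁) := by noncomm_ring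
    _ = 0 := by rw [hi2]; simp
  have hX1jX1 : X₁ * Xj * X₁ = 0 := by
    calc X₁ * Xj * X₁ = X₁ * (Xj * X₁) := by noncomm_ring
    _ = X₁ * ((1 - X₁) * Xj) := by rw [hcomm_j]
    _ = (X₁ - X₁ * X₁) * Xj := by noncomm_ring
    _ = 0 := by rw [h1]; simp
  have hQ2 : (X₁ * Xj) * (X₁ * Xj) = 0 := by
    calc (X₁ * Xj) * (X₁ * Xj) = (X₁ * Xj * X₁) * Xj := by noncomm_ring
    _ = 0 := by rw [hX1jX1]; simp
  have hPQ : (Xi * X₁) * (X₁ * Xj) = Xi * Xj - X₁ * (Xi * Xj) := by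
    calc (Xi * X₁) * (X₁ * Xj) = Xi * (X₁ * X₁) * Xj := by noncomm_ring
    _ = (Xi * X₁) * Xj := by rw [h1]
    _ = ((1 - X₁) * Xi) * Xj := by rw [hcomm_i]
    _ = Xi * Xj - X₁ * (Xi * Xj) := by noncomm_ring
  have hQP : (X₁ * Xj) * (Xi * X₁) = -(X₁ * (Xi * Xj)) := by
    calc (X₁ * Xj) * (Xi * X₁) = X₁ * (Xj * Xi) * X₁ := by noncomm_ring
    _ = X₁ * (-(Xi * Xj)) * X₁ := by rw [hji]
    _ = -(X₁ * (Xi * Xj * X₁)) := by noncomm_ring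
    _ = -(X₁ * (X₁ * (Xi * Xj))) := by rw [hjXiXjX1]
    _ = -((X₁ * X₁) * (Xi * Xj)) := by noncomm_ring
    _ = -(X₁ * (Xi * Xj)) := by rw [h1]
  have hiji : Xi * Xj * Xi = 0 := by
    calc Xi * Xj * Xi = Xi * (Xj * Xi) := by noncomm_ring
    _ = Xi * (-(Xi * Xj)) := by rw [hji]
    _ = -((Xi * Xi) * Xj) := by noncomm_ring
    _ = 0 := by rw [hi2]; simp
  have hPQP : (Xi * X₁) * (X₁ * Xj) * (Xi * X₁) = 0 := by
    rw [hPQ]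
    calc (Xi * Xj - X₁ * (Xi * Xj)) * (Xi * X₁)
        = (Xi * Xj * Xi) * X₁ - X₁ * ((Xi * Xj * Xi) * X₁) := by noncomm_ring
    _ = 0 := by rw [hiji]; simp
  have hXijQ : (Xi * Xj) * (X₁ * Xj) = 0 := by
    calc (Xi * Xj) * (X₁ * Xj) = (Xi * Xj * X₁) * Xj := by noncomm_ring
    _ = (X₁ * (Xi * Xj)) * Xj := by rw [hjXiXjX1]
    _ = X₁ * (Xi * (Xj * Xj)) := by noncomm_ring
    _ = 0 := by rw [hj2]; simp
  have step1 : (1 + lam • (Xi * X₁)) * (1 + X₁ * Xj) * (1 - lam • (Xi * X₁))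
      = 1 + X₁ * Xj + lam • (Xi * Xj) := by
    have expand : (1 + lam • (Xi * X₁)) * (1 + X₁ * Xj) * (1 - lam • (Xi * X₁))
        = 1 + X₁ * Xj + lam • ((Xi * X₁) * (X₁ * Xj)) - lam • ((X₁ * Xj) * (Xi * X₁))
          - (lam * lam) • ((Xi * X₁) * (Xi * X₁))
          - (lam * lam) • ((Xi * X₁) * (X₁ * Xj) * (Xi * X₁)) := by
      simp only [mul_add, add_mul, mul_sub, sub_mul, mul_one, one_mul,
        smul_mul_assoc, mul_smul_comm, smul_smul]
      module
    rw [expand, hPQP, hPQ, hQP, hP2]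
    simp only [smul_zero, smul_sub, smul_neg, sub_zero]
    abel
  rw [step1]
  have expand2 : (1 + X₁ * Xj + lam • (Xi * Xj)) * (1 - X₁ * Xj)
      = 1 + lam • (Xi * Xj) - (X₁ * Xj) * (X₁ * Xj)
        - lam • ((Xi * Xj) * (X₁ * Xj)) := by
    simp only [mul_add, add_mul, mul_sub, sub_mul, mul_one, one_mul,
      smul_mul_assoc, mul_smul_comm]
    module
  rw [expand2, hQ2, hXijQ]
  simp
end

section
/- Let A be an associative composition algebra over a commutative ring R with norm q and conjugation. For X = [[a, α],[-ᾱ, b]] and Y = [[a, β],[-β̄, b']] with α, β ∈ A and a, b, b' ∈ R, define q(X) = q(α) + ab, q(Y) = q(β) + ab', and X ⊙ Y = [[a, αβ],[-(αβ)‾, b·q(Y) + b'·q(X) - abb']]. Then q(X ⊙ Y) = q(X)·q(Y). -/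
/-- for X = [[a,α],[-ᾱ,b]], Y = [[a,β],[-β̄,b']] over an associative
composition algebra with q(X) = q(α) + ab, the composition
X ⊙ Y = [[a, αβ],[-(αβ)‾, b·q(Y) + b'·q(X) - abb']] satisfies q(X ⊙ Y) = q(X)·q(Y). -/
theorem composition_norm {R A : Type*} [CommRing R] [Ring A] [Algebra R A]
    (q : A → R) (c : A → A)
    (hmul : ∀ α β : A, q (α * β) = q α * q β)
    (hc : ∀ α : A, α * c α = algebraMap R A (q α))
    (hc' : ∀ α : A, c α * α = algebraMap R A (q α))
    (a b b' : R) (α β : A) :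
    q (α * β) + a * (b * (q β + a * b') + b' * (q α + a * b) - a * b * b')
      = (q α + a * b) * (q β + a * b') := by
  rw [hmul]; ring
end
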